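/- arXiv:1805.09494 — 2 statements merged into one kernel-verified Lean document; each statement's English description precedes it below -/
import Mathlib

section
/- Let A : F → E be linear with Ax ∈ K\{0} strictly feasible, L = Image(A). Then ν(L) ≤ ‖A⁻¹‖ · dist(A, I), where ‖A⁻¹‖ := max_{x ∈ Image(A), ‖x‖ ≤ 1} min_{w : Aw = x} |w|. -/
open RealInnerProductSpace

/-- A (possibly non-Euclidean) norm, given as a function. -/
def IsNorm {E : Type*} [NormedAddCommGroup E] [InnerProductSpace ℝ E] (N : E → ℝ) : Prop :=
  (∀ x, 0 ≤ N x) ∧ (∀ x, N x = 0 ↔ x = 0) ∧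
    (∀ (c : ℝ) (x : E), N (c • x) = |c| * N x) ∧ (∀ x y, N (x + y) ≤ N x + N y)

/-- The dual norm `‖u‖* = max_{N x = 1} ⟪u,x⟫`. -/
noncomputable def dualNorm {E : Type*} [NormedAddCommGroup E] [InnerProductSpace ℝ E]
    (N : E → ℝ) (u : E) : ℝ :=
  sSup {r | ∃ x, N x = 1 ∧ r = ⟪u, x⟫}

/-- The dual cone `K* = {u : ⟪u,x⟫ ≥ 0 for all x ∈ K}`. -/
def dualCone {E : Type*} [NormedAddCommGroup E] [InnerProductSpace ℝ E] (K : Set E) :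
    Set E := {u | ∀ x ∈ K, 0 ≤ ⟪u, x⟫}

/-- `ν(L) = min {‖u − y‖* : u ∈ K*, y ∈ L^⊥, ‖u‖* = 1}`. -/
noncomputable def nuMeasure {E : Type*} [NormedAddCommGroup E] [InnerProductSpace ℝ E]
    (N : E → ℝ) (K : Set E) (L : Submodule ℝ E) : ℝ :=
  sInf {r | ∃ u y, u ∈ dualCone K ∧ y ∈ Lᗮ ∧ dualNorm N u = 1 ∧ r = dualNorm N (u - y)}

/-- The operator norm `‖A‖ = max_{|w| ≤ 1} ‖A w‖` of `A : F → E`, with respect to the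
norm `NF` on `F` and the norm `NE` on `E`. -/
noncomputable def opNorm {F E : Type*} [NormedAddCommGroup F] [InnerProductSpace ℝ F]
    [NormedAddCommGroup E] [InnerProductSpace ℝ E]
    (NF : F → ℝ) (NE : E → ℝ) (A : F →ₗ[ℝ] E) : ℝ :=
  sSup {r | ∃ w, NF w ≤ 1 ∧ r = NE (A w)}

/-- Renegar's distance to infeasibility of `A x ∈ K \ {0}`: the infimum of `‖A − Ã‖`
over `Ã` whose adjoint kills some nonzero element of `K*`. -/
noncomputable def distToInfeas {F E : Type*} [NormedAddCommGroup F] [InnerProductSpace ℝ F]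
    [FiniteDimensional ℝ F] [NormedAddCommGroup E] [InnerProductSpace ℝ E]
    [FiniteDimensional ℝ E] (NF : F → ℝ) (NE : E → ℝ) (K : Set E) (A : F →ₗ[ℝ] E) : ℝ :=
  sInf {r | ∃ B : F →ₗ[ℝ] E,
    (∃ w, w ∈ dualCone K ∧ w ≠ 0 ∧ LinearMap.adjoint B w = 0) ∧
    r = opNorm NF NE (A - B)}

/-- The norm of the set-valued inverse,
`‖A⁻¹‖ = max_{x ∈ Image(A), ‖x‖ ≤ 1} min_{w : A w = x} |w|`. -/
noncomputable def invNorm {F E : Type*} [NormedAddCommGroup F] [InnerProductSpace ℝ F]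
    [NormedAddCommGroup E] [InnerProductSpace ℝ E]
    (NF : F → ℝ) (NE : E → ℝ) (A : F →ₗ[ℝ] E) : ℝ :=
  sSup {r | ∃ x ∈ LinearMap.range A, NE x ≤ 1 ∧ r = sInf {s | ∃ w, A w = x ∧ s = NF w}}


/-!
Let `B` be admissible in `distToInfeas`, with `B* u = 0` for some `u ∈ K*` of dual norm one.
For `x = A w ∈ L` we get `⟪u, x⟫ = ⟪u, (A - B) w⟫ ≤ ‖A - B‖ |w|`, and minimising over the
preimages `w` gives `⟪u, ·⟫ ≤ ‖A⁻¹‖ ‖A - B‖ ‖·‖` on `L`. Hahn–Banach extends `⟪u, ·⟫|_L` to a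
functional `⟪v, ·⟫` on `E` with `‖v‖* ≤ ‖A⁻¹‖ ‖A - B‖`, and `u - v ∈ L^⊥`, so `v` is a competitor
in `ν(L)`. If `K* = {0}` there is no admissible `B`, but then `ν(L) = sInf ∅ = 0`.
-/

lemma le_mul_sInf_of_forall_le_mul {S : Set ℝ} {a b : ℝ} (hS : S.Nonempty) (ha : 0 ≤ a)
    (h : ∀ s ∈ S, b ≤ a * s) : b ≤ a * sInf S := by
  rw [← smul_eq_mul, ← Real.sInf_smul_of_nonneg ha]
  exact le_csInf hS.smul_set (by rintro _ ⟨s, hs, rfl⟩; exact h s hs)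

lemma isNorm_norm {E : Type*} [NormedAddCommGroup E] [InnerProductSpace ℝ E] :
    IsNorm (fun x : E => ‖x‖) :=
  ⟨norm_nonneg, fun _ => norm_eq_zero, fun c x => by simp [norm_smul],
    norm_add_le⟩

namespace IsNorm

variable {E : Type*} [NormedAddCommGroup E] [InnerProductSpace ℝ E] {N : E → ℝ}

lemma nonneg (hN : IsNorm N) (x : E) : 0 ≤ N x := hN.1 x

lemma eq_zero_iff (hN : IsNorm N) {x : E} : N x = 0 ↔ x = 0 := hN.2.1 x

lemma smul (hN : IsNorm N) (c : ℝ) (x : E) : N (c • x) = |c| * N x := hN.2.2.1 c x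

lemma add_le (hN : IsNorm N) (x y : E) : N (x + y) ≤ N x + N y := hN.2.2.2 x y

lemma zero (hN : IsNorm N) : N 0 = 0 := hN.eq_zero_iff.2 rfl

lemma pos (hN : IsNorm N) {x : E} (hx : x ≠ 0) : 0 < N x :=
  (hN.nonneg x).lt_of_ne' (mt hN.eq_zero_iff.1 hx)

lemma smul_of_pos (hN : IsNorm N) {c : ℝ} (hc : 0 < c) (x : E) : N (c • x) = c * N x := by
  rw [hN.smul, abs_of_pos hc]

lemma inv_smul_self (hN : IsNorm N) {x : E} (hx : x ≠ 0) : N ((N x)⁻¹ • x) = 1 := by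
  rw [hN.smul_of_pos (inv_pos.2 (hN.pos hx)), inv_mul_cancel₀ (hN.pos hx).ne']

lemma le_mul_of_forall_eq_one (hN : IsNorm N) {f : E → ℝ} {M : ℝ}
    (hf : ∀ t : ℝ, 0 < t → ∀ x, f (t • x) = t * f x) (hM : ∀ x, N x = 1 → f x ≤ M) (x : E) :
    f x ≤ M * N x := by
  rcases eq_or_ne x 0 with rfl | hx
  · have hf0 : f 0 = 2 * f 0 := by simpa using hf 2 two_pos 0
    rw [hN.zero, mul_zero]
    linarith
  · calc f x = f (N x • (N x)⁻¹ • x) := by rw [smul_inv_smul₀ (hN.pos hx).ne']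
      _ = N x * f ((N x)⁻¹ • x) := hf _ (hN.pos hx) _
      _ ≤ N x * M := mul_le_mul_of_nonneg_left (hM _ (hN.inv_smul_self hx)) (hN.nonneg x)
      _ = M * N x := mul_comm _ _

lemma comp_injective {E' : Type*} [NormedAddCommGroup E'] [InnerProductSpace ℝ E']
    (hN : IsNorm N) {T : E' →ₗ[ℝ] E} (hT : Function.Injective T) : IsNorm (N ∘ T) :=
  ⟨fun x => hN.nonneg (T x), fun x => by simp [hN.eq_zero_iff, hT.eq_iff' T.map_zero],
    fun c x => by simp [hN.smul], fun x y => by simpa using hN.add_le (T x) (T y)⟩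

lemma convexOn (hN : IsNorm N) : ConvexOn ℝ Set.univ N :=
  ⟨convex_univ, fun x _ y _ a b ha hb _ => (hN.add_le _ _).trans_eq <| by
    rw [hN.smul, hN.smul, abs_of_nonneg ha, abs_of_nonneg hb]; rfl⟩

variable [FiniteDimensional ℝ E]

lemma continuous (hN : IsNorm N) : Continuous N :=
  continuousOn_univ.1 (hN.convexOn.continuousOn isOpen_univ)

lemma exists_pos_mul_norm_le (hN : IsNorm N) : ∃ c, 0 < c ∧ ∀ x, c * ‖x‖ ≤ N x := by
  obtain ⟨c, hc, hcN⟩ := (isCompact_sphere (0 : E) 1).exists_forall_le'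
    hN.continuous.continuousOn fun x hx => hN.pos (ne_zero_of_mem_unit_sphere ⟨x, hx⟩)
  refine ⟨c, hc, fun x => ?_⟩
  -- `c * ‖x‖ - N x` is positively homogeneous and nonpositive on the unit sphere.
  have := isNorm_norm.le_mul_of_forall_eq_one (f := fun x => c * ‖x‖ - N x) (M := 0)
    (fun t ht x => by simp only [norm_smul, hN.smul_of_pos ht, Real.norm_of_nonneg ht.le]; ring)
    (fun x hx => by simpa [hx] using hcN x (mem_sphere_zero_iff_norm.2 hx)) x
  simpa using this

lemma isCompact_sublevel (hN : IsNorm N) (r : ℝ) : IsCompact {x | N x ≤ r} := by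
  obtain ⟨c, hc, hcN⟩ := hN.exists_pos_mul_norm_le
  refine Metric.isCompact_of_isClosed_isBounded (isClosed_le hN.continuous continuous_const) ?_
  refine (Metric.isBounded_closedBall (x := 0) (r := r / c)).subset fun x hx => ?_
  rw [mem_closedBall_zero_iff, le_div_iff₀' hc]
  exact (hcN x).trans hx

lemma bddAbove_of_continuous (hN : IsNorm N) {f : E → ℝ} (hf : Continuous f) :
    BddAbove {r | ∃ x, N x ≤ 1 ∧ r = f x} :=
  ((hN.isCompact_sublevel 1).bddAbove_image hf.continuousOn).mono <| by
    rintro _ ⟨x, hx, rfl⟩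
    exact ⟨x, hx, rfl⟩

end IsNorm

section DualNorm

variable {E : Type*} [NormedAddCommGroup E] [InnerProductSpace ℝ E] {N : E → ℝ}

lemma dualNorm_le {u : E} {c : ℝ} (hc : 0 ≤ c) (h : ∀ x, N x = 1 → ⟪u, x⟫ ≤ c) :
    dualNorm N u ≤ c :=
  Real.sSup_le (by rintro _ ⟨x, hx, rfl⟩; exact h x hx) hc

lemma dualNorm_zero : dualNorm N 0 = 0 :=
  le_antisymm (dualNorm_le le_rfl (by simp))
    (Real.sSup_nonneg (by rintro _ ⟨x, -, rfl⟩; simp))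

lemma dualNorm_smul {c : ℝ} (hc : 0 ≤ c) (u : E) : dualNorm N (c • u) = c * dualNorm N u := by
  rw [dualNorm, dualNorm, ← smul_eq_mul, ← Real.sSup_smul_of_nonneg hc]
  congr 1
  ext r
  simp only [Set.mem_ofPred_eq, Set.mem_smul_set, real_inner_smul_left, smul_eq_mul]
  constructor
  · rintro ⟨x, hx, rfl⟩
    exact ⟨_, ⟨x, hx, rfl⟩, rfl⟩
  · rintro ⟨_, ⟨x, hx, rfl⟩, rfl⟩
    exact ⟨x, hx, rfl⟩

variable [FiniteDimensional ℝ E]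

lemma dualNorm_bddAbove (hN : IsNorm N) (u : E) :
    BddAbove {r | ∃ x, N x = 1 ∧ r = ⟪u, x⟫} :=
  (hN.bddAbove_of_continuous (continuous_const.inner continuous_id)).mono <| by
    rintro _ ⟨x, hx, rfl⟩
    exact ⟨x, hx.le, rfl⟩

lemma inner_le_dualNorm_mul (hN : IsNorm N) (u x : E) : ⟪u, x⟫ ≤ dualNorm N u * N x :=
  hN.le_mul_of_forall_eq_one (fun t _ x => real_inner_smul_right u x t)
    (fun x hx => le_csSup (dualNorm_bddAbove hN u) ⟨x, hx, rfl⟩) x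

lemma dualNorm_pos (hN : IsNorm N) {u : E} (hu : u ≠ 0) : 0 < dualNorm N u := by
  have h := inner_le_dualNorm_mul hN u u
  rw [real_inner_self_eq_norm_sq] at h
  exact pos_of_mul_pos_left ((by positivity : 0 < ‖u‖ ^ 2).trans_le h) (hN.nonneg u)

lemma dualNorm_nonneg (hN : IsNorm N) (u : E) : 0 ≤ dualNorm N u := by
  rcases eq_or_ne u 0 with rfl | hu
  · exact dualNorm_zero.ge
  · exact (dualNorm_pos hN hu).le

end DualNorm

section OpNorm

variable {F E : Type*} [NormedAddCommGroup F] [InnerProductSpace ℝ F]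
  [NormedAddCommGroup E] [InnerProductSpace ℝ E] {NF : F → ℝ} {NE : E → ℝ}

lemma opNorm_nonneg (hNE : IsNorm NE) (T : F →ₗ[ℝ] E) : 0 ≤ opNorm NF NE T :=
  Real.sSup_nonneg (by rintro _ ⟨w, -, rfl⟩; exact hNE.nonneg _)

variable [FiniteDimensional ℝ F] [FiniteDimensional ℝ E]

lemma apply_le_opNorm_mul (hNF : IsNorm NF) (hNE : IsNorm NE) (T : F →ₗ[ℝ] E) (w : F) :
    NE (T w) ≤ opNorm NF NE T * NF w :=
  hNF.le_mul_of_forall_eq_one (fun t ht w => by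
    show NE (T (t • w)) = t * NE (T w)
    rw [map_smul, hNE.smul_of_pos ht])
    (fun w hw => le_csSup (hNF.bddAbove_of_continuous
      (hNE.continuous.comp T.continuous_of_finiteDimensional)) ⟨w, hw.le, rfl⟩) w

end OpNorm

/-- `preimageNorm NF A x = min_{A w = x} |w|`; it is `0 = sInf ∅` off the range of `A`. -/
noncomputable def preimageNorm {F E : Type*} [AddCommMonoid F] [Module ℝ F]
    [AddCommMonoid E] [Module ℝ E] (NF : F → ℝ) (A : F →ₗ[ℝ] E) (x : E) : ℝ :=
  sInf {s | ∃ w, A w = x ∧ s = NF w}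

section PreimageNorm

variable {F E : Type*} [NormedAddCommGroup F] [InnerProductSpace ℝ F]
  [NormedAddCommGroup E] [InnerProductSpace ℝ E]
  {NF : F → ℝ} {NE : E → ℝ} {A : F →ₗ[ℝ] E}

lemma preimageNorm_nonneg (hNF : IsNorm NF) (x : E) : 0 ≤ preimageNorm NF A x :=
  Real.sInf_nonneg (by rintro _ ⟨w, -, rfl⟩; exact hNF.nonneg w)

lemma preimageNorm_le (hNF : IsNorm NF) {w : F} {x : E} (hw : A w = x) :
    preimageNorm NF A x ≤ NF w :=
  csInf_le ⟨0, by rintro _ ⟨w, -, rfl⟩; exact hNF.nonneg w⟩ ⟨w, hw, rfl⟩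

lemma le_mul_preimageNorm {x : E} (hx : x ∈ LinearMap.range A) {a b : ℝ} (ha : 0 ≤ a)
    (h : ∀ w, A w = x → b ≤ a * NF w) : b ≤ a * preimageNorm NF A x := by
  obtain ⟨w₀, hw₀⟩ := hx
  exact le_mul_sInf_of_forall_le_mul ⟨_, w₀, hw₀, rfl⟩ ha
    (by rintro _ ⟨w, hw, rfl⟩; exact h w hw)

lemma preimageNorm_smul (hNF : IsNorm NF) {t : ℝ} (ht : 0 < t) (x : E) :
    preimageNorm NF A (t • x) = t * preimageNorm NF A x := by
  rw [preimageNorm, preimageNorm, ← smul_eq_mul, ← Real.sInf_smul_of_nonneg ht.le]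
  congr 1
  ext s
  simp only [Set.mem_ofPred_eq, Set.mem_smul_set, smul_eq_mul]
  constructor
  · rintro ⟨w, hw, rfl⟩
    refine ⟨_, ⟨t⁻¹ • w, by rw [map_smul, hw, inv_smul_smul₀ ht.ne'], rfl⟩, ?_⟩
    rw [hNF.smul_of_pos (inv_pos.2 ht), mul_inv_cancel_left₀ ht.ne']
  · rintro ⟨_, ⟨w, hw, rfl⟩, rfl⟩
    exact ⟨t • w, by rw [map_smul, hw], (hNF.smul_of_pos ht w).symm⟩

lemma invNorm_nonneg (hNF : IsNorm NF) : 0 ≤ invNorm NF NE A :=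
  Real.sSup_nonneg (by rintro _ ⟨x, -, -, rfl⟩; exact preimageNorm_nonneg hNF x)

variable [FiniteDimensional ℝ F]

lemma invNorm_bddAbove (hNF : IsNorm NF) (hNE : IsNorm NE) :
    BddAbove {r | ∃ x ∈ LinearMap.range A, NE x ≤ 1 ∧ r = preimageNorm NF A x} := by
  obtain ⟨g, hg⟩ := A.rangeRestrict.exists_rightInverse_of_surjective A.range_rangeRestrict
  obtain ⟨M, hM⟩ := (hNE.comp_injective (LinearMap.range A).injective_subtype)
    |>.bddAbove_of_continuous (hNF.continuous.comp g.continuous_of_finiteDimensional)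
  refine ⟨M, ?_⟩
  rintro _ ⟨x, hx, hx1, rfl⟩
  have hAg : A (g ⟨x, hx⟩) = x := congrArg Subtype.val (LinearMap.congr_fun hg ⟨x, hx⟩)
  exact (preimageNorm_le hNF hAg).trans (hM ⟨⟨x, hx⟩, hx1, rfl⟩)

lemma preimageNorm_le_invNorm_mul (hNF : IsNorm NF) (hNE : IsNorm NE) (x : E) :
    preimageNorm NF A x ≤ invNorm NF NE A * NE x := by
  refine hNE.le_mul_of_forall_eq_one (fun t ht x => preimageNorm_smul hNF ht x) (fun x hx => ?_) x
  by_cases hxA : x ∈ LinearMap.range A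
  · exact le_csSup (invNorm_bddAbove hNF hNE) ⟨x, hxA, hx.le, rfl⟩
  · have hempty : {s | ∃ w, A w = x ∧ s = NF w} = ∅ :=
      Set.eq_empty_of_forall_notMem (by rintro _ ⟨w, rfl, -⟩; exact hxA ⟨w, rfl⟩)
    rw [preimageNorm, hempty, Real.sInf_empty]
    exact invNorm_nonneg hNF

end PreimageNorm

section Nu

variable {F E : Type*} [NormedAddCommGroup F] [InnerProductSpace ℝ F] [FiniteDimensional ℝ F]
  [NormedAddCommGroup E] [InnerProductSpace ℝ E] [FiniteDimensional ℝ E]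
  {NF : F → ℝ} {NE : E → ℝ}

lemma exists_sub_mem_orthogonal_dualNorm_le (hN : IsNorm NE) (L : Submodule ℝ E) (u : E)
    {c : ℝ} (hc : 0 ≤ c) (h : ∀ x ∈ L, ⟪u, x⟫ ≤ c * NE x) :
    ∃ v, u - v ∈ Lᗮ ∧ dualNorm NE v ≤ c := by
  obtain ⟨g, hgu, hgN⟩ := exists_extension_of_le_sublinear ⟨L, (innerₗ E u).domRestrict L⟩
    (fun x => c * NE x) (fun t ht x => by rw [hN.smul_of_pos ht]; ring)
    (fun x y => by rw [← mul_add]; exact mul_le_mul_of_nonneg_left (hN.add_le x y) hc)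
    (fun x => h x x.2)
  set v := (InnerProductSpace.toDual ℝ E).symm (LinearMap.toContinuousLinearMap g)
  have hv : ∀ x, ⟪v, x⟫ = g x := fun x => by simp [v]
  refine ⟨v, (Submodule.mem_orthogonal _ _).2 fun x hx => ?_, dualNorm_le hc fun x hx => ?_⟩
  · rw [inner_sub_right, real_inner_comm v x, hv, hgu ⟨x, hx⟩]
    simp [real_inner_comm]
  · simpa [hv, hx] using hgN x

lemma inner_le_dualNorm_mul_opNorm_sub_mul_preimageNorm (hNF : IsNorm NF) (hNE : IsNorm NE)
    {A B : F →ₗ[ℝ] E} {u : E} (hBu : LinearMap.adjoint B u = 0) {x : E}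
    (hx : x ∈ LinearMap.range A) :
    ⟪u, x⟫ ≤ dualNorm NE u * opNorm NF NE (A - B) * preimageNorm NF A x := by
  refine le_mul_preimageNorm hx (mul_nonneg (dualNorm_nonneg hNE u) (opNorm_nonneg hNE _))
    fun w hw => ?_
  calc ⟪u, x⟫ = ⟪u, (A - B) w⟫ := by
        rw [LinearMap.sub_apply, inner_sub_right, ← LinearMap.adjoint_inner_left B, hBu,
          inner_zero_left, sub_zero, hw]
    _ ≤ dualNorm NE u * NE ((A - B) w) := inner_le_dualNorm_mul hNE u _
    _ ≤ dualNorm NE u * (opNorm NF NE (A - B) * NF w) :=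
        mul_le_mul_of_nonneg_left (apply_le_opNorm_mul hNF hNE _ w) (dualNorm_nonneg hNE u)
    _ = dualNorm NE u * opNorm NF NE (A - B) * NF w := (mul_assoc _ _ _).symm

lemma nuMeasure_le_invNorm_mul_opNorm_sub (hNF : IsNorm NF) (hNE : IsNorm NE) {K : Set E}
    (A B : F →ₗ[ℝ] E) {w : E} (hwK : w ∈ dualCone K) (hw : w ≠ 0)
    (hBw : LinearMap.adjoint B w = 0) :
    nuMeasure NE K (LinearMap.range A) ≤ invNorm NF NE A * opNorm NF NE (A - B) := by
  set u := (dualNorm NE w)⁻¹ • w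
  have hu1 : dualNorm NE u = 1 := by
    rw [dualNorm_smul (inv_nonneg.2 (dualNorm_nonneg hNE w)),
      inv_mul_cancel₀ (dualNorm_pos hNE hw).ne']
  have huK : u ∈ dualCone K := fun x hx => by
    rw [real_inner_smul_left]
    exact mul_nonneg (inv_nonneg.2 (dualNorm_nonneg hNE w)) (hwK x hx)
  have hBu : LinearMap.adjoint B u = 0 := by rw [map_smul, hBw, smul_zero]
  obtain ⟨v, hv, hvc⟩ := exists_sub_mem_orthogonal_dualNorm_le hNE (LinearMap.range A) u
    (mul_nonneg (invNorm_nonneg hNF) (opNorm_nonneg hNE _)) fun x hx => by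
      calc ⟪u, x⟫ ≤ dualNorm NE u * opNorm NF NE (A - B) * preimageNorm NF A x :=
            inner_le_dualNorm_mul_opNorm_sub_mul_preimageNorm hNF hNE hBu hx
        _ ≤ opNorm NF NE (A - B) * (invNorm NF NE A * NE x) := by
            rw [hu1, one_mul]
            exact mul_le_mul_of_nonneg_left (preimageNorm_le_invNorm_mul hNF hNE x)
              (opNorm_nonneg hNE _)
        _ = invNorm NF NE A * opNorm NF NE (A - B) * NE x := by ring
  calc nuMeasure NE K (LinearMap.range A) ≤ dualNorm NE (u - (u - v)) :=
        csInf_le ⟨0, by rintro _ ⟨_, _, -, -, -, rfl⟩; exact dualNorm_nonneg hNE _⟩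
          ⟨u, u - v, huK, hv, hu1, rfl⟩
    _ = dualNorm NE v := by rw [sub_sub_cancel]
    _ ≤ invNorm NF NE A * opNorm NF NE (A - B) := hvc

end Nu

lemma nuMeasure_eq_zero_of_dualCone_subset {E : Type*} [NormedAddCommGroup E]
    [InnerProductSpace ℝ E] {N : E → ℝ} {K : Set E} (hK : dualCone K ⊆ {0})
    (L : Submodule ℝ E) : nuMeasure N K L = 0 := by
  rw [nuMeasure]
  convert Real.sInf_empty
  refine Set.eq_empty_of_forall_notMem ?_
  rintro _ ⟨u, y, hu, -, hu1, -⟩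
  rw [hK hu, dualNorm_zero] at hu1
  exact zero_ne_one hu1

theorem nu_le_invNorm_mul_dist_general {F E : Type*}
    [NormedAddCommGroup F] [InnerProductSpace ℝ F] [FiniteDimensional ℝ F]
    [NormedAddCommGroup E] [InnerProductSpace ℝ E] [FiniteDimensional ℝ E]
    (NF : F → ℝ) (hNF : IsNorm NF) (NE : E → ℝ) (hNE : IsNorm NE)
    (K : Set E) (A : F →ₗ[ℝ] E) :
    nuMeasure NE K (LinearMap.range A) ≤ invNorm NF NE A * distToInfeas NF NE K A := by
  by_cases hK : ∃ w ∈ dualCone K, w ≠ 0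
  · obtain ⟨w, hwK, hw⟩ := hK
    refine le_mul_sInf_of_forall_le_mul ⟨_, 0, ⟨w, hwK, hw, by simp⟩, rfl⟩
      (invNorm_nonneg hNF) ?_
    rintro _ ⟨B, ⟨w', hw'K, hw', hBw'⟩, rfl⟩
    exact nuMeasure_le_invNorm_mul_opNorm_sub hNF hNE A B hw'K hw' hBw'
  · push Not at hK
    rw [nuMeasure_eq_zero_of_dualCone_subset hK]
    exact mul_nonneg (invNorm_nonneg hNF)
      (Real.sInf_nonneg (by rintro _ ⟨B, -, rfl⟩; exact opNorm_nonneg hNE _))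

/-- `ν(L) ≤ ‖A⁻¹‖ ⬝ dist(A, I)` for `L = Image(A)`. -/
theorem nu_le_invNorm_mul_dist {F E : Type*}
    [NormedAddCommGroup F] [InnerProductSpace ℝ F] [FiniteDimensional ℝ F]
    [NormedAddCommGroup E] [InnerProductSpace ℝ E] [FiniteDimensional ℝ E]
    (NF : F → ℝ) (hNF : IsNorm NF) (NE : E → ℝ) (hNE : IsNorm NE)
    (K : Set E) (hKclosed : IsClosed K) (hKconv : Convex ℝ K)
    (hKcone : ∀ ⦃c : ℝ⦄, 0 ≤ c → ∀ ⦃x⦄, x ∈ K → c • x ∈ K)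
    (hKint : (interior K).Nonempty) (hKpointed : ∀ x ∈ K, -x ∈ K → x = 0)
    (A : F →ₗ[ℝ] E) (hfeas : ∃ w, A w ∈ interior K) :
    nuMeasure NE K (LinearMap.range A) ≤ invNorm NF NE A * distToInfeas NF NE K A :=
  nu_le_invNorm_mul_dist_general NF hNF NE hNE K A
end

section
/- If ‖·‖ = ‖·‖_e is the norm induced by (K,e) for some e ∈ int(K), and L ∩ int(K) ≠ ∅, then σ(L) = ν(L). -/
open RealInnerProductSpace

/-- The norm `‖x‖ₑ = min {α ≥ 0 : x + αe ∈ K, −x + αe ∈ K}` induced by `(K, e)`. -/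
noncomputable def inducedNorm {E : Type*} [NormedAddCommGroup E] [InnerProductSpace ℝ E]
    (K : Set E) (e : E) (x : E) : ℝ :=
  sInf {α | 0 ≤ α ∧ x + α • e ∈ K ∧ -x + α • e ∈ K}

/-- `λᵥ(x) = sup {t : x − tv ∈ K}`. -/
noncomputable def lambdaDir {E : Type*} [NormedAddCommGroup E] [InnerProductSpace ℝ E]
    (K : Set E) (v : E) (x : E) : ℝ :=
  sSup {t | x - t • v ∈ K}

/-- The sigma measure `σ(L) = min_{v ∈ K, N v = 1} max_{x ∈ L, N x ≤ 1} λᵥ(x)`. -/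
noncomputable def sigmaMeasure {E : Type*} [NormedAddCommGroup E] [InnerProductSpace ℝ E]
    (N : E → ℝ) (K : Set E) (L : Submodule ℝ E) : ℝ :=
  sInf {r | ∃ v ∈ K, N v = 1 ∧ r = sSup {t | ∃ x ∈ L, N x ≤ 1 ∧ t = lambdaDir K v x}}

/-!
`σ(L) ≤ ν(L)`: for a feasible pair `(u, y)` of `ν`, where `‖u‖* = ⟪u, e⟫ = 1`, the direction
`v = e` gives `λₑ(x) ≤ ⟪u, x⟫ = ⟪u - y, x⟫ ≤ ‖u - y‖*` on the unit ball of `L`.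

`ν(L) ≤ σ(L)`: for `v` and any `c` above `max_{x ∈ L, ‖x‖ ≤ 1} λᵥ(x)`, the compact convex set
`(L ∩ ball) - c v` misses `K`. Separating the two gives `u ∈ K*` with `⟪u, v⟫ = 1` and
`⟪u, x⟫ ≤ c ‖x‖` on `L`; Hahn–Banach extends `⟪u, ·⟫|_L` to a functional of dual norm `≤ c`, which
differs from `u` by some `y ∈ L^⊥`. Rescaling by `⟪u, e⟫ ≥ ⟪u, v⟫ = 1` makes `(u, y)` feasible
for `ν` with value `≤ c`.

Everything about the induced norm comes from `‖x‖ₑ ≤ c ↔ ce + x ∈ K ∧ ce - x ∈ K`; for instance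
`‖u‖* = ⟪u, e⟫` on `K*`, and `λᵥ(x) ≤ ‖x‖ₑ` when `‖v‖ₑ = 1`.
-/

open Set Filter Topology Pointwise

theorem exists_properCone_coe_eq {F : Type*} [AddCommGroup F] [Module ℝ F] [TopologicalSpace F]
    {K : Set F} (hKclosed : IsClosed K) (hKconv : Convex ℝ K)
    (hKcone : ∀ ⦃c : ℝ⦄, 0 ≤ c → ∀ ⦃x⦄, x ∈ K → c • x ∈ K) (hK : K.Nonempty) :
    ∃ C : ProperCone ℝ F, (C : Set F) = K :=
  ⟨{ carrier := K
     add_mem' := fun {x y} hx hy => by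
       simpa [smul_add, smul_smul] using
         hKcone zero_le_two (hKconv hx hy (by norm_num) (by norm_num) (add_halves 1))
     zero_mem' := by
       obtain ⟨x, hx⟩ := hK
       simpa using hKcone le_rfl hx
     smul_mem' := fun c _ hx => hKcone c.2 hx
     isClosed' := hKclosed }, rfl⟩

section

variable {E : Type*} [NormedAddCommGroup E] [InnerProductSpace ℝ E]

theorem inducedNorm_nonneg (K : Set E) (e x : E) : 0 ≤ inducedNorm K e x :=
  Real.sInf_nonneg fun _ h => h.1

theorem inducedNorm_neg (K : Set E) (e x : E) : inducedNorm K e (-x) = inducedNorm K e x := by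
  simp only [inducedNorm, neg_neg, and_comm (a := -x + _ ∈ K)]

theorem dualNorm_smul_of_nonneg (N : E → ℝ) {c : ℝ} (hc : 0 ≤ c) (w : E) :
    dualNorm N (c • w) = c * dualNorm N w := by
  have : {r | ∃ x, N x = 1 ∧ r = ⟪c • w, x⟫} = c • {r | ∃ x, N x = 1 ∧ r = ⟪w, x⟫} := by
    ext r
    simp only [real_inner_smul_left, mem_ofPred_eq, mem_smul_set, smul_eq_mul]
    constructor
    · rintro ⟨x, hx, rfl⟩
      exact ⟨_, ⟨x, hx, rfl⟩, rfl⟩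
    · rintro ⟨_, ⟨x, hx, rfl⟩, rfl⟩
      exact ⟨x, hx, rfl⟩
  rw [dualNorm, this, Real.sSup_smul_of_nonneg hc, smul_eq_mul, dualNorm]

theorem exists_mem_dualCone_inner_lt [CompleteSpace E] (C : ProperCone ℝ E) {B : Set E}
    (hBconv : Convex ℝ B) (hBcomp : IsCompact B) (hB0 : (0 : E) ∈ B) {v : E} {c : ℝ} (hc : 0 < c)
    (hBC : ∀ x ∈ B, x - c • v ∉ C) :
    ∃ u ∈ dualCone C, ⟪u, v⟫ = 1 ∧ ∀ x ∈ B, ⟪u, x⟫ < c := by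
  obtain ⟨f, hfC, hfB⟩ := C.hyperplane_separation (hBconv.translate (-(c • v)))
    (hBcomp.image (by fun_prop)) <| disjoint_left.2 <| by
      rintro _ ⟨x, hx, rfl⟩
      simpa [neg_add_eq_sub] using hBC x hx
  have hw (x : E) : ⟪(InnerProductSpace.toDual ℝ E).symm f, x⟫ = f x :=
    InnerProductSpace.toDual_symm_apply
  have hfB' (x : E) (hx : x ∈ B) : f x < f v * c := by
    have := hfB _ (mem_image_of_mem _ hx)
    rw [map_add, map_neg, map_smul, smul_eq_mul] at this
    linarith
  have hfv : 0 < f v := by simpa [hc] using hfB' 0 hB0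
  refine ⟨(f v)⁻¹ • (InnerProductSpace.toDual ℝ E).symm f, fun x hx => ?_, ?_, fun x hx => ?_⟩
  · rw [real_inner_smul_left, hw]
    exact mul_nonneg (inv_nonneg.2 hfv.le) (hfC x hx)
  · rw [real_inner_smul_left, hw, inv_mul_cancel₀ hfv.ne']
  · rw [real_inner_smul_left, hw, inv_mul_lt_iff₀ hfv]
    exact hfB' x hx

variable {C : ProperCone ℝ E} {e : E}

theorem inducedNorm_zero : inducedNorm C e 0 = 0 :=
  le_antisymm (csInf_le ⟨0, fun _ h => h.1⟩ ⟨le_rfl, by simp⟩)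
    (inducedNorm_nonneg _ _ _)

theorem exists_add_smul_mem_of_mem_interior (he : e ∈ interior C) (x : E) :
    ∃ α : ℝ, 0 ≤ α ∧ x + α • e ∈ C := by
  have hcont : Tendsto (fun t : ℝ => e + t • x) (𝓝 0) (𝓝 e) := by
    have : Continuous fun t : ℝ => e + t • x := by fun_prop
    simpa using this.tendsto 0
  have hev : ∀ᶠ t in 𝓝[>] (0 : ℝ), e + t • x ∈ C ∧ 0 < t :=
    ((hcont.eventually (mem_interior_iff_mem_nhds.1 he)).filter_mono nhdsWithin_le_nhds).and
      self_mem_nhdsWithin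
  obtain ⟨t, ht, ht0⟩ := hev.exists
  refine ⟨t⁻¹, inv_nonneg.2 ht0.le, ?_⟩
  have := C.smul_mem ht (inv_nonneg.2 ht0.le)
  rwa [smul_add, smul_smul, inv_mul_cancel₀ ht0.ne', one_smul, add_comm] at this

theorem add_smul_mem_of_le (he : e ∈ C) {x : E} {α β : ℝ} (hx : x + α • e ∈ C) (hαβ : α ≤ β) :
    x + β • e ∈ C := by
  simpa [add_assoc, ← add_smul] using add_mem hx (C.smul_mem he (sub_nonneg.2 hαβ))

theorem add_inducedNorm_smul_mem (he : e ∈ interior C) (x : E) :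
    x + inducedNorm C e x • e ∈ C ∧ -x + inducedNorm C e x • e ∈ C := by
  have hclosed : IsClosed {α : ℝ | 0 ≤ α ∧ x + α • e ∈ C ∧ -x + α • e ∈ C} :=
    isClosed_Ici.inter
      ((C.isClosed.preimage (by fun_prop)).inter (C.isClosed.preimage (by fun_prop)))
  obtain ⟨α, hα, hxα⟩ := exists_add_smul_mem_of_mem_interior he x
  obtain ⟨β, hβ, hxβ⟩ := exists_add_smul_mem_of_mem_interior he (-x)
  have hne : {α : ℝ | 0 ≤ α ∧ x + α • e ∈ C ∧ -x + α • e ∈ C}.Nonempty :=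
    ⟨max α β, le_max_of_le_left hα, add_smul_mem_of_le (interior_subset he) hxα (le_max_left _ _),
      add_smul_mem_of_le (interior_subset he) hxβ (le_max_right _ _)⟩
  exact (hclosed.csInf_mem hne ⟨0, fun _ h => h.1⟩).2

theorem inducedNorm_le_iff (he : e ∈ interior C) {x : E} {c : ℝ} (hc : 0 ≤ c) :
    inducedNorm C e x ≤ c ↔ x + c • e ∈ C ∧ -x + c • e ∈ C :=
  ⟨fun h => ⟨add_smul_mem_of_le (interior_subset he) (add_inducedNorm_smul_mem he x).1 h,
      add_smul_mem_of_le (interior_subset he) (add_inducedNorm_smul_mem he x).2 h⟩,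
    fun h => csInf_le ⟨0, fun _ h => h.1⟩ ⟨hc, h⟩⟩

theorem inducedNorm_add (he : e ∈ interior C) (x y : E) :
    inducedNorm C e (x + y) ≤ inducedNorm C e x + inducedNorm C e y := by
  refine (inducedNorm_le_iff he (add_nonneg (inducedNorm_nonneg _ _ _)
    (inducedNorm_nonneg _ _ _))).2 ⟨?_, ?_⟩
  · convert add_mem (add_inducedNorm_smul_mem he x).1 (add_inducedNorm_smul_mem he y).1 using 1
    rw [add_smul]; abel
  · convert add_mem (add_inducedNorm_smul_mem he x).2 (add_inducedNorm_smul_mem he y).2 using 1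
    rw [add_smul]; abel

theorem inducedNorm_smul_of_nonneg (he : e ∈ interior C) {c : ℝ} (hc : 0 ≤ c) (x : E) :
    inducedNorm C e (c • x) = c * inducedNorm C e x := by
  have hle {c : ℝ} (hc : 0 ≤ c) (x : E) : inducedNorm C e (c • x) ≤ c * inducedNorm C e x :=
    (inducedNorm_le_iff he (mul_nonneg hc (inducedNorm_nonneg _ _ _))).2
      ⟨by simpa [smul_add, smul_smul] using C.smul_mem (add_inducedNorm_smul_mem he x).1 hc,
        by simpa [smul_add, smul_smul] using C.smul_mem (add_inducedNorm_smul_mem he x).2 hc⟩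
  rcases hc.eq_or_lt with rfl | hc
  · simp [inducedNorm_zero]
  refine le_antisymm (hle hc.le x) ((le_inv_mul_iff₀ hc).1 ?_)
  simpa [inv_smul_smul₀ hc.ne'] using hle (inv_nonneg.2 hc.le) (c • x)

theorem lowerSemicontinuous_inducedNorm (he : e ∈ interior C) :
    LowerSemicontinuous (inducedNorm C e) := by
  refine lowerSemicontinuous_iff_isClosed_preimage.2 fun c => ?_
  rcases lt_or_ge c 0 with hc | hc
  · convert isClosed_empty
    exact eq_empty_of_forall_notMem fun x hx => (inducedNorm_nonneg C e x).not_gt (hx.trans_lt hc)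
  · have : inducedNorm C e ⁻¹' Iic c = (· + c • e) ⁻¹' C ∩ (fun x => -x + c • e) ⁻¹' C :=
      ext fun x => inducedNorm_le_iff he hc
    rw [this]
    exact (C.isClosed.preimage (by fun_prop)).inter (C.isClosed.preimage (by fun_prop))

theorem convex_setOf_inducedNorm_le_one (he : e ∈ interior C) :
    Convex ℝ {x | inducedNorm C e x ≤ 1} := by
  intro a ha b hb p q hp hq hpq
  calc inducedNorm C e (p • a + q • b)
      ≤ inducedNorm C e (p • a) + inducedNorm C e (q • b) := inducedNorm_add he _ _
    _ = p * inducedNorm C e a + q * inducedNorm C e b := by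
      rw [inducedNorm_smul_of_nonneg he hp, inducedNorm_smul_of_nonneg he hq]
    _ ≤ p * 1 + q * 1 := by gcongr <;> assumption
    _ = 1 := by rw [mul_one, mul_one, hpq]

theorem mul_inducedNorm_le_of_sub_smul_mem (he : e ∈ interior C) {v x : E} {t : ℝ}
    (hv : v ∈ C) (h : x - t • v ∈ C) : t * inducedNorm C e v ≤ inducedNorm C e x := by
  rcases lt_or_ge t 0 with ht | ht
  · nlinarith [inducedNorm_nonneg C e v, inducedNorm_nonneg C e x]
  rw [← inducedNorm_smul_of_nonneg he ht]
  refine (inducedNorm_le_iff he (inducedNorm_nonneg C e x)).2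
    ⟨add_mem (C.smul_mem hv ht) (C.smul_mem (interior_subset he) (inducedNorm_nonneg C e x)), ?_⟩
  convert add_mem h (add_inducedNorm_smul_mem he x).2 using 1
  abel

theorem le_lambdaDir (he : e ∈ interior C) {v x : E} {t : ℝ} (hv : v ∈ C)
    (hv1 : inducedNorm C e v = 1) (h : x - t • v ∈ C) : t ≤ lambdaDir C v x :=
  le_csSup ⟨inducedNorm C e x, fun s hs => by
    simpa [hv1] using mul_inducedNorm_le_of_sub_smul_mem he hv hs⟩ h

theorem lambdaDir_le_inducedNorm (he : e ∈ interior C) {v : E} (hv : v ∈ C)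
    (hv1 : inducedNorm C e v = 1) (x : E) : lambdaDir C v x ≤ inducedNorm C e x :=
  Real.sSup_le (fun s hs => by simpa [hv1] using mul_inducedNorm_le_of_sub_smul_mem he hv hs)
    (inducedNorm_nonneg C e x)

theorem sSup_lambdaDir_nonneg (L : Submodule ℝ E) (v : E) :
    0 ≤ sSup {t | ∃ x ∈ L, inducedNorm C e x ≤ 1 ∧ t = lambdaDir C v x} :=
  Real.sSup_nonneg' ⟨_, ⟨0, L.zero_mem, by rw [inducedNorm_zero]; exact zero_le_one, rfl⟩,
    Real.sSup_nonneg' ⟨0, by simp, le_rfl⟩⟩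

theorem sigmaMeasure_eq_zero_of_subsingleton [Subsingleton E] (L : Submodule ℝ E) :
    sigmaMeasure (inducedNorm C e) C L = 0 := by
  rw [sigmaMeasure]
  convert Real.sInf_empty
  refine eq_empty_of_forall_notMem ?_
  rintro _ ⟨v, -, hv, -⟩
  simp [Subsingleton.elim v 0, inducedNorm_zero] at hv

theorem nuMeasure_eq_zero_of_subsingleton [Subsingleton E] (L : Submodule ℝ E) :
    nuMeasure (inducedNorm C e) C L = 0 := by
  rw [nuMeasure]
  convert Real.sInf_empty
  refine eq_empty_of_forall_notMem ?_
  rintro _ ⟨u, y, -, -, hu, -⟩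
  have : {r | ∃ x, inducedNorm C e x = 1 ∧ r = ⟪u, x⟫} = ∅ :=
    eq_empty_of_forall_notMem fun _ ⟨x, hx, _⟩ => by
      simp [Subsingleton.elim x 0, inducedNorm_zero] at hx
  simp [dualNorm, this] at hu

theorem exists_mem_orthogonal_dualNorm_sub_le [FiniteDimensional ℝ E] (he : e ∈ interior C)
    {L : Submodule ℝ E} {u : E} {c : ℝ} (hc : 0 ≤ c)
    (hu : ∀ x ∈ L, ⟪u, x⟫ ≤ c * inducedNorm C e x) :
    ∃ y ∈ Lᗮ, dualNorm (inducedNorm C e) (u - y) ≤ c := by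
  obtain ⟨g, hgL, hg⟩ := exists_extension_of_le_sublinear ((innerₛₗ ℝ u).toPMap L)
    (fun x => c * inducedNorm C e x)
    (fun r hr x => by rw [inducedNorm_smul_of_nonneg he hr.le]; ring)
    (fun x y => by rw [← mul_add]; exact mul_le_mul_of_nonneg_left (inducedNorm_add he x y) hc)
    (fun x => hu x x.2)
  set w := (InnerProductSpace.toDual ℝ E).symm (LinearMap.toContinuousLinearMap g)
  have hw (x : E) : ⟪w, x⟫ = g x := InnerProductSpace.toDual_symm_apply
  refine ⟨u - w, (Submodule.mem_orthogonal' _ _).2 fun x hx => ?_, ?_⟩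
  · rw [inner_sub_left, hw, hgL ⟨x, hx⟩]
    simp
  · rw [sub_sub_cancel]
    refine Real.sSup_le ?_ hc
    rintro _ ⟨x, hx, rfl⟩
    simpa [hw, hx] using hg x

section Salient

variable (hC : ∀ x ∈ C, -x ∈ C → x = 0) (he : e ∈ interior C)
include hC he

theorem eq_zero_of_inducedNorm_eq_zero {x : E} (hx : inducedNorm C e x = 0) : x = 0 := by
  have := (inducedNorm_le_iff he le_rfl).1 hx.le
  exact hC x (by simpa using this.1) (by simpa using this.2)

theorem ne_zero_of_mem_interior [Nontrivial E] : e ≠ 0 := by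
  rintro rfl
  have hall (y : E) : y ∈ C := by
    obtain ⟨_, _, hy⟩ := exists_add_smul_mem_of_mem_interior he y
    simpa using hy
  obtain ⟨x, hx⟩ := exists_ne (0 : E)
  exact hx (hC x (hall x) (hall (-x)))

theorem inducedNorm_self [Nontrivial E] : inducedNorm C e e = 1 := by
  have he' := interior_subset he
  refine le_antisymm ((inducedNorm_le_iff he zero_le_one).2
    ⟨by simpa using add_mem he' he', by simp⟩) ?_
  by_contra! h
  have hpos : (1 - inducedNorm C e e) • e ∈ C := C.smul_mem he' (sub_nonneg.2 h.le)
  have hneg : -((1 - inducedNorm C e e) • e) ∈ C := by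
    simpa [sub_smul, neg_add_eq_sub] using (add_inducedNorm_smul_mem he e).2
  exact ne_zero_of_mem_interior hC he
    ((smul_eq_zero.1 (hC _ hpos hneg)).resolve_left (sub_ne_zero.2 h.ne'))

theorem isBounded_setOf_inducedNorm_le_one [FiniteDimensional ℝ E] :
    Bornology.IsBounded {x | inducedNorm C e x ≤ 1} := by
  rcases subsingleton_or_nontrivial E with hE | hE
  · exact Bornology.IsBounded.all _
  obtain ⟨x₀, hx₀, hmin⟩ :=
    ((lowerSemicontinuous_inducedNorm he).lowerSemicontinuousOn _).exists_isMinOn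
      (NormedSpace.sphere_nonempty.2 zero_le_one) (isCompact_sphere 0 1)
  have hm : 0 < inducedNorm C e x₀ := (inducedNorm_nonneg _ _ _).lt_of_ne' fun h =>
    ne_zero_of_mem_sphere one_ne_zero ⟨x₀, hx₀⟩ (eq_zero_of_inducedNorm_eq_zero hC he h)
  refine (Metric.isBounded_closedBall (x := 0) (r := (inducedNorm C e x₀)⁻¹)).subset fun x hx => ?_
  rw [mem_closedBall_zero_iff]
  rcases eq_or_ne x 0 with rfl | hx0
  · simp [hm.le]
  have hxn : 0 < ‖x‖ := norm_pos_iff.2 hx0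
  have : inducedNorm C e x₀ ≤ inducedNorm C e (‖x‖⁻¹ • x) := hmin (by simp [norm_smul, hx0])
  rw [inducedNorm_smul_of_nonneg he (inv_nonneg.2 hxn.le)] at this
  rw [le_inv_comm₀ hxn hm]
  exact this.trans (mul_le_of_le_one_right (inv_nonneg.2 hxn.le) hx)

theorem isCompact_inter_setOf_inducedNorm_le_one [FiniteDimensional ℝ E] (L : Submodule ℝ E) :
    IsCompact ((L : Set E) ∩ {x | inducedNorm C e x ≤ 1}) :=
  Metric.isCompact_of_isClosed_isBounded
    (L.closed_of_finiteDimensional.inter ((lowerSemicontinuous_inducedNorm he).isClosed_preimage 1))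
    ((isBounded_setOf_inducedNorm_le_one hC he).subset inter_subset_right)

theorem inner_le_mul_inducedNorm {L : Submodule ℝ E} {w : E} {c : ℝ}
    (h : ∀ x ∈ L, inducedNorm C e x = 1 → ⟪w, x⟫ ≤ c) {x : E} (hx : x ∈ L) :
    ⟪w, x⟫ ≤ c * inducedNorm C e x := by
  rcases (inducedNorm_nonneg C e x).eq_or_lt with h0 | hpos
  · simp [eq_zero_of_inducedNorm_eq_zero hC he h0.symm, inducedNorm_zero]
  have := h _ (L.smul_mem (inducedNorm C e x)⁻¹ hx)
    (by rw [inducedNorm_smul_of_nonneg he (inv_nonneg.2 hpos.le), inv_mul_cancel₀ hpos.ne'])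
  rwa [real_inner_smul_right, inv_mul_le_iff₀ hpos, mul_comm] at this

theorem bddAbove_dualNorm [FiniteDimensional ℝ E] (w : E) :
    BddAbove {r | ∃ x, inducedNorm C e x = 1 ∧ r = ⟪w, x⟫} := by
  obtain ⟨R, hR⟩ := (isBounded_setOf_inducedNorm_le_one hC he).exists_norm_le
  refine ⟨‖w‖ * R, ?_⟩
  rintro _ ⟨x, hx, rfl⟩
  exact (real_inner_le_norm w x).trans (mul_le_mul_of_nonneg_left (hR x hx.le) (norm_nonneg w))

theorem inner_le_dualNorm_mul_s16 [FiniteDimensional ℝ E] (w x : E) :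
    ⟪w, x⟫ ≤ dualNorm (inducedNorm C e) w * inducedNorm C e x :=
  inner_le_mul_inducedNorm hC he (L := ⊤)
    (fun x _ hx => le_csSup (bddAbove_dualNorm hC he w) ⟨x, hx, rfl⟩) Submodule.mem_top

variable [Nontrivial E]

theorem dualNorm_nonneg_s16 (w : E) : 0 ≤ dualNorm (inducedNorm C e) w := by
  apply Real.sSup_nonneg'
  rcases le_total 0 ⟪w, e⟫ with h | h
  · exact ⟨_, ⟨e, inducedNorm_self hC he, rfl⟩, h⟩
  · refine ⟨_, ⟨-e, by rw [inducedNorm_neg, inducedNorm_self hC he], rfl⟩, ?_⟩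
    rw [inner_neg_right]
    linarith

theorem dualNorm_eq_inner_of_mem_dualCone [FiniteDimensional ℝ E] {u : E} (hu : u ∈ dualCone C) :
    dualNorm (inducedNorm C e) u = ⟪u, e⟫ := by
  refine le_antisymm (Real.sSup_le ?_ (hu e (interior_subset he)))
    (le_csSup (bddAbove_dualNorm hC he u) ⟨e, inducedNorm_self hC he, rfl⟩)
  rintro _ ⟨x, hx, rfl⟩
  have := hu _ ((inducedNorm_le_iff he zero_le_one).1 hx.le).2
  rw [one_smul, inner_add_right, inner_neg_right] at this
  linarith

variable [FiniteDimensional ℝ E]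

theorem nuMeasure_le_of_inner_le {L : Submodule ℝ E} {u : E} {c : ℝ} (hu : u ∈ dualCone C)
    (hue : 1 ≤ ⟪u, e⟫) (hc : 0 ≤ c) (huL : ∀ x ∈ L, ⟪u, x⟫ ≤ c * inducedNorm C e x) :
    nuMeasure (inducedNorm C e) C L ≤ c := by
  obtain ⟨y, hy, hyc⟩ := exists_mem_orthogonal_dualNorm_sub_le he hc huL
  have hs : 0 < ⟪u, e⟫⁻¹ := inv_pos.2 (one_pos.trans_le hue)
  have hsu : ⟪u, e⟫⁻¹ • u ∈ dualCone C := fun x hx => by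
    rw [real_inner_smul_left]
    exact mul_nonneg hs.le (hu x hx)
  refine csInf_le_of_le ⟨0, ?_⟩ ⟨⟪u, e⟫⁻¹ • u, ⟪u, e⟫⁻¹ • y, hsu, Lᗮ.smul_mem _ hy, ?_, rfl⟩ ?_
  · rintro _ ⟨-, -, -, -, -, rfl⟩
    exact dualNorm_nonneg_s16 hC he _
  · rw [dualNorm_eq_inner_of_mem_dualCone hC he hsu, real_inner_smul_left,
      inv_mul_cancel₀ (one_pos.trans_le hue).ne']
  · rw [← smul_sub, dualNorm_smul_of_nonneg _ hs.le]
    calc ⟪u, e⟫⁻¹ * dualNorm (inducedNorm C e) (u - y) ≤ 1 * c :=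
          mul_le_mul (inv_le_one_of_one_le₀ hue) hyc (dualNorm_nonneg_s16 hC he _) zero_le_one
      _ = c := one_mul c

theorem nuMeasure_le_sigmaMeasure (L : Submodule ℝ E) :
    nuMeasure (inducedNorm C e) C L ≤ sigmaMeasure (inducedNorm C e) C L := by
  refine le_csInf ⟨_, e, interior_subset he, inducedNorm_self hC he, rfl⟩ ?_
  rintro _ ⟨v, hv, hv1, rfl⟩
  set h := sSup {t | ∃ x ∈ L, inducedNorm C e x ≤ 1 ∧ t = lambdaDir C v x}
  have hh : 0 ≤ h := sSup_lambdaDir_nonneg L v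
  have hbdd : BddAbove {t | ∃ x ∈ L, inducedNorm C e x ≤ 1 ∧ t = lambdaDir C v x} := by
    refine ⟨1, ?_⟩
    rintro _ ⟨x, -, hx1, rfl⟩
    exact (lambdaDir_le_inducedNorm he hv hv1 x).trans hx1
  refine le_of_forall_pos_le_add fun ε hε => ?_
  set B := (L : Set E) ∩ {x | inducedNorm C e x ≤ 1}
  have hBC : ∀ x ∈ B, x - (h + ε) • v ∉ C := by
    rintro x ⟨hxL, hx1⟩ hmem
    have := (le_lambdaDir he hv hv1 hmem).trans (le_csSup hbdd ⟨x, hxL, hx1, rfl⟩)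
    linarith
  obtain ⟨u, hu, huv, huB⟩ := exists_mem_dualCone_inner_lt C
    (L.convex.inter (convex_setOf_inducedNorm_le_one he))
    (isCompact_inter_setOf_inducedNorm_le_one hC he L)
    ⟨L.zero_mem, by simp [inducedNorm_zero]⟩ (by positivity) hBC
  have hue : 1 ≤ ⟪u, e⟫ := by
    have := hu _ ((inducedNorm_le_iff he zero_le_one).1 hv1.le).2
    rw [one_smul, inner_add_right, inner_neg_right, huv] at this
    linarith
  exact nuMeasure_le_of_inner_le hC he hu hue (by positivity)
    fun x hxL => inner_le_mul_inducedNorm hC he (fun x hxL hx1 => (huB x ⟨hxL, hx1.le⟩).le) hxL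

theorem exists_mem_dualCone_inner_eq_one : ∃ u ∈ dualCone C, ⟪u, e⟫ = 1 := by
  obtain ⟨u, hu, hue, -⟩ := exists_mem_dualCone_inner_lt C (convex_singleton 0)
    isCompact_singleton rfl one_pos (v := e) fun x hx hmem => by
      rw [mem_singleton_iff.1 hx, one_smul, zero_sub] at hmem
      exact ne_zero_of_mem_interior hC he (hC e (interior_subset he) hmem)
  exact ⟨u, hu, hue⟩

theorem lambdaDir_le_dualNorm_sub {L : Submodule ℝ E} {u y x : E} (hu : u ∈ dualCone C)
    (hue : ⟪u, e⟫ = 1) (hy : y ∈ Lᗮ) (hxL : x ∈ L) (hx1 : inducedNorm C e x ≤ 1) :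
    lambdaDir C e x ≤ dualNorm (inducedNorm C e) (u - y) := by
  refine Real.sSup_le (fun t ht => ?_) (dualNorm_nonneg_s16 hC he _)
  calc t = ⟪u, t • e⟫ := by rw [real_inner_smul_right, hue, mul_one]
    _ ≤ ⟪u, x⟫ := by
      have := hu _ ht
      rw [inner_sub_right] at this
      linarith
    _ = ⟪u - y, x⟫ := by rw [inner_sub_left, (Submodule.mem_orthogonal' _ _).1 hy x hxL, sub_zero]
    _ ≤ dualNorm (inducedNorm C e) (u - y) * inducedNorm C e x := inner_le_dualNorm_mul_s16 hC he _ _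
    _ ≤ dualNorm (inducedNorm C e) (u - y) := mul_le_of_le_one_right (dualNorm_nonneg_s16 hC he _) hx1

theorem sigmaMeasure_le_nuMeasure (L : Submodule ℝ E) :
    sigmaMeasure (inducedNorm C e) C L ≤ nuMeasure (inducedNorm C e) C L := by
  obtain ⟨u₀, hu₀, hu₀e⟩ := exists_mem_dualCone_inner_eq_one hC he
  refine le_csInf ⟨_, u₀, 0, hu₀, Lᗮ.zero_mem,
    (dualNorm_eq_inner_of_mem_dualCone hC he hu₀).trans hu₀e, rfl⟩ ?_
  rintro _ ⟨u, y, hu, hy, hu1, rfl⟩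
  rw [dualNorm_eq_inner_of_mem_dualCone hC he hu] at hu1
  have hσ : sigmaMeasure (inducedNorm C e) C L ≤
      sSup {t | ∃ x ∈ L, inducedNorm C e x ≤ 1 ∧ t = lambdaDir C e x} :=
    csInf_le ⟨0, by rintro _ ⟨v, -, -, rfl⟩; exact sSup_lambdaDir_nonneg L v⟩
      ⟨e, interior_subset he, inducedNorm_self hC he, rfl⟩
  refine hσ.trans (Real.sSup_le ?_ (dualNorm_nonneg_s16 hC he _))
  rintro _ ⟨x, hxL, hx1, rfl⟩
  exact lambdaDir_le_dualNorm_sub hC he hu hu1 hy hxL hx1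

end Salient

end

theorem sigma_eq_nu_inducedNorm_general {E : Type*} [NormedAddCommGroup E]
    [InnerProductSpace ℝ E] [FiniteDimensional ℝ E] (K : Set E)
    (hKclosed : IsClosed K) (hKconv : Convex ℝ K)
    (hKcone : ∀ ⦃c : ℝ⦄, 0 ≤ c → ∀ ⦃x⦄, x ∈ K → c • x ∈ K)
    (hKpointed : ∀ x ∈ K, -x ∈ K → x = 0)
    (e : E) (he : e ∈ interior K)
    (L : Submodule ℝ E) :
    sigmaMeasure (inducedNorm K e) K L = nuMeasure (inducedNorm K e) K L := by
  obtain ⟨C, rfl⟩ := exists_properCone_coe_eq hKclosed hKconv hKcone ⟨e, interior_subset he⟩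
  rcases subsingleton_or_nontrivial E with hE | hE
  · rw [sigmaMeasure_eq_zero_of_subsingleton, nuMeasure_eq_zero_of_subsingleton]
  · exact le_antisymm (sigmaMeasure_le_nuMeasure hKpointed he L)
      (nuMeasure_le_sigmaMeasure hKpointed he L)

/-- For the norm induced by `(K, e)`, the sigma measure and the distance to
infeasibility coincide: `σ(L) = ν(L)`. -/
theorem sigma_eq_nu_inducedNorm {E : Type*} [NormedAddCommGroup E]
    [InnerProductSpace ℝ E] [FiniteDimensional ℝ E] (K : Set E)
    (hKclosed : IsClosed K) (hKconv : Convex ℝ K)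
    (hKcone : ∀ ⦃c : ℝ⦄, 0 ≤ c → ∀ ⦃x⦄, x ∈ K → c • x ∈ K)
    (hKpointed : ∀ x ∈ K, -x ∈ K → x = 0)
    (e : E) (he : e ∈ interior K)
    (L : Submodule ℝ E) (hL : (↑L ∩ interior K).Nonempty) :
    sigmaMeasure (inducedNorm K e) K L = nuMeasure (inducedNorm K e) K L :=
  sigma_eq_nu_inducedNorm_general K hKclosed hKconv hKcone hKpointed e he L
end
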